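/- arXiv:1410.2446 — 4 statements merged into one kernel-verified Lean document; each statement's English description precedes it below -/
import Mathlib

section
/- For every integer k with 1 ≤ k ≤ l−2 and every even integer a, the following identity holds in R_l: χ(k,a)·χ(k,a+2) = χ(k+1,a)·χ(k−1,a+2) + 1. (All the characters appearing involve at most l−1 factors, so this is the T-system satisfied by the ε-characters of the simple specialised Kirillov–Reshetikhin modules W_ε(k,ε^a) with k < l.) -/
/-!
`Rl l` is the Laurent polynomial ring over `ℤ` in `l` commuting variables
`Y_0, Y_2, …, Y_{2l−2}`, with the index of `Y` read modulo `2l`.  It is realised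
as the group algebra of the free abelian group `ZMod l →₀ ℤ`, the variable with
even index `n` corresponding to the residue `n/2` modulo `l`.
-/

/-- The Laurent polynomial ring `ℤ[Y_0^{±1}, Y_2^{±1}, …, Y_{2l−2}^{±1}]`,
indices read modulo `2l`. -/
abbrev Rl (l : ℕ) : Type := AddMonoidAlgebra ℤ (ZMod l →₀ ℤ)

/-- The monomial `Y_n^e` (for `n` an even integer, read modulo `2l`). -/
noncomputable def Y (l : ℕ) (n e : ℤ) : Rl l :=
  AddMonoidAlgebra.single (Finsupp.single ((n / 2 : ℤ) : ZMod l) e) 1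

/-- The `ε`-character `χ(k,a)` of the Kirillov–Reshetikhin module `W_ε(k,ε^a)`:
`χ(k,a) = Σ_{i=0}^{k} (Π_{t=0}^{k−1−i} Y_{a+2t}) · (Π_{t=k+1−i}^{k} Y_{a+2t}^{−1})`. -/
noncomputable def chi (l : ℕ) (k : ℕ) (a : ℤ) : Rl l :=
  ∑ i ∈ Finset.range (k + 1),
    (∏ t ∈ Finset.range (k - i), Y l (a + 2 * (t : ℤ)) 1) *
      ∏ t ∈ Finset.Icc (k + 1 - i) k, Y l (a + 2 * (t : ℤ)) (-1)

/-- `Z = Y_0Y_2⋯Y_{2l−2} + (Y_0Y_2⋯Y_{2l−2})^{−1}`, the `ε`-character of the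
Frobenius pullback `z₁ = L(𝐘₁)`. -/
noncomputable def Z (l : ℕ) : Rl l :=
  (∏ t ∈ Finset.range l, Y l (2 * (t : ℤ)) 1) +
    ∏ t ∈ Finset.range l, Y l (2 * (t : ℤ)) (-1)

/-!
Put `y_t = Y_{a+2t}` and `P_j = y_0 ⋯ y_{j-1}`. The `i`-th term of `χ(k,a)` is
`P_{k-i} P_{k+1-i} / P_{k+1}`, so `χ(k,a) P_{k+1} = s_0 + ⋯ + s_k` with `s_j = P_j P_{j+1}`,
and likewise `χ(k,a+2) y_0 P_{k+2} = s_1 + ⋯ + s_{k+1}`. Clearing the unit `y_0 P_{k+1} P_{k+2}`,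
and noting `s_0 = y_0`, `s_{k+1} = P_{k+1} P_{k+2}`, the T-system becomes, with
`B = s_1 + ⋯ + s_k`, the identity `(s_0 + B)(B + s_{k+1}) = (s_0 + B + s_{k+1}) B + s_0 s_{k+1}`.
It holds for any sequence of units in a commutative ring.
-/

open Finset

section Sequence

variable {R : Type*} [CommRing R]

/-- `χ(k,a)` with `Y_{a+2t}` replaced by the unit `u t`. -/
def chiSeq (u : ℕ → Rˣ) (k : ℕ) : R :=
  ∑ i ∈ range (k + 1), ((∏ t ∈ range (k - i), u t) * ∏ t ∈ Icc (k + 1 - i) k, (u t)⁻¹ : Rˣ)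

lemma chiSeq_mul_prod (u : ℕ → Rˣ) (k : ℕ) :
    chiSeq u k * ↑(∏ t ∈ range (k + 1), u t) =
      ∑ j ∈ range (k + 1), ↑((∏ t ∈ range j, u t) * ∏ t ∈ range (j + 1), u t) := by
  rw [chiSeq, sum_mul, ← sum_range_reflect]
  refine sum_congr rfl fun j hj => ?_
  have hjk : j ≤ k := Nat.lt_succ_iff.mp (mem_range.mp hj)
  rw [← Units.val_mul, show k - (k + 1 - 1 - j) = j by omega,
    show k + 1 - (k + 1 - 1 - j) = j + 1 by omega, prod_inv_distrib,
    ← Ico_add_one_right_eq_Icc, ← prod_range_mul_prod_Ico _ (by omega : j + 1 ≤ k + 1),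
    mul_mul_mul_comm, inv_mul_cancel, mul_one]

lemma chiSeq_shift_mul_prod (u : ℕ → Rˣ) (k : ℕ) :
    chiSeq (fun t => u (t + 1)) k * ↑(u 0 * ∏ t ∈ range (k + 2), u t) =
      ∑ j ∈ range (k + 1), ↑((∏ t ∈ range (j + 1), u t) * ∏ t ∈ range (j + 2), u t) := by
  simp only [prod_range_succ' u]
  rw [show u 0 * ((∏ t ∈ range (k + 1), u (t + 1)) * u 0) =
      (∏ t ∈ range (k + 1), u (t + 1)) * (u 0 * u 0) by ac_rfl,
    Units.val_mul, ← mul_assoc, chiSeq_mul_prod, sum_mul]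
  refine sum_congr rfl fun j _ => ?_
  rw [← Units.val_mul]
  ac_rfl

theorem chiSeq_tsystem (u : ℕ → Rˣ) {k : ℕ} (hk : 1 ≤ k) :
    chiSeq u k * chiSeq (fun t => u (t + 1)) k =
      chiSeq u (k + 1) * chiSeq (fun t => u (t + 1)) (k - 1) + 1 := by
  obtain ⟨n, rfl⟩ := Nat.exists_eq_add_of_le' hk
  have h1 := chiSeq_mul_prod u (n + 1)
  have h2 := chiSeq_shift_mul_prod u (n + 1)
  have h3 := chiSeq_mul_prod u (n + 2)
  have h4 := chiSeq_shift_mul_prod u n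
  rw [sum_range_succ'] at h1
  rw [sum_range_succ] at h2
  rw [sum_range_succ, sum_range_succ'] at h3
  apply (u 0 * (∏ t ∈ range (n + 2), u t) * ∏ t ∈ range (n + 3), u t).isUnit.mul_left_cancel
  simp only [Nat.add_sub_cancel, zero_add, prod_range_zero, prod_range_one, one_mul,
    Units.val_mul] at h1 h2 h3 h4 ⊢
  set B := ∑ j ∈ range (n + 1), ((∏ t ∈ range (j + 1), u t : Rˣ) : R) * ↑(∏ t ∈ range (j + 2), u t)
  set p := ((∏ t ∈ range (n + 2), u t : Rˣ) : R)
  set q := ((∏ t ∈ range (n + 3), u t : Rˣ) : R)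
  linear_combination (chiSeq (fun t => u (t + 1)) (n + 1) * u 0 * q) * h1 + (u 0 + B) * h2
    - (chiSeq (fun t => u (t + 1)) n * u 0 * p) * h3 - (u 0 + B + p * q) * h4

end Sequence

lemma Y_mul_Y_neg (l : ℕ) (n e : ℤ) : Y l n e * Y l n (-e) = 1 := by
  simp [Y, AddMonoidAlgebra.single_mul_single, AddMonoidAlgebra.one_def]

noncomputable def Yunit (l : ℕ) (n : ℤ) : (Rl l)ˣ where
  val := Y l n 1
  inv := Y l n (-1)
  val_inv := Y_mul_Y_neg l n 1
  inv_val := by simpa using Y_mul_Y_neg l n (-1)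

lemma chi_eq_chiSeq (l k : ℕ) (a : ℤ) : chi l k a = chiSeq (fun t => Yunit l (a + 2 * t)) k := by
  simp only [chi, chiSeq, Units.val_mul, Units.coe_prod]
  rfl

theorem tsystem_eps_general (l : ℕ) (k : ℕ) (hk1 : 1 ≤ k) (a : ℤ) :
    chi l k a * chi l k (a + 2) = chi l (k + 1) a * chi l (k - 1) (a + 2) + 1 := by
  have hshift : (fun t : ℕ => Yunit l (a + 2 + 2 * t)) =
      fun t => Yunit l (a + 2 * ((t + 1 : ℕ) : ℤ)) := by
    funext t
    push_cast
    ring_nf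
  simp only [chi_eq_chiSeq, hshift]
  exact chiSeq_tsystem _ hk1

/-- The T-system for the `ε`-characters of the simple specialised
Kirillov–Reshetikhin modules: for `1 ≤ k ≤ l−2` and `a` even,
`χ(k,a)·χ(k,a+2) = χ(k+1,a)·χ(k−1,a+2) + 1`. -/
theorem tsystem_eps (l : ℕ) (hl : 2 ≤ l) (k : ℕ) (hk1 : 1 ≤ k) (hk2 : k ≤ l - 2)
    (a : ℤ) (ha : Even a) :
    chi l k a * chi l k (a + 2) = chi l (k + 1) a * chi l (k - 1) (a + 2) + 1 :=
  tsystem_eps_general l k hk1 a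
end

section
/- For every even integer a, the following identity holds in R_l: χ(l,a) = Y_a·Y_{a+2}⋯Y_{a+2l−2} + (Y_a·Y_{a+2}⋯Y_{a+2l−2})^{−1} + χ(l−2,a+2). (This is the root-of-unity phenomenon: the specialisation at ε of the generic Kirillov–Reshetikhin character with l factors decomposes as the character of the Frobenius pullback z₁ plus a smaller Kirillov–Reshetikhin character.) -/
open Finset

section ChiTerm

variable {M : Type*} [CommMonoid M]

def chiTerm (f g : ℕ → M) (k i : ℕ) : M :=
  (∏ t ∈ range (k - i), f t) * ∏ t ∈ Icc (k + 1 - i) k, g t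

theorem chiTerm_zero (f g : ℕ → M) (k : ℕ) : chiTerm f g k 0 = ∏ t ∈ range k, f t := by
  simp [chiTerm]

theorem chiTerm_self (f g : ℕ → M) (k : ℕ) : chiTerm f g k k = ∏ t ∈ Icc 1 k, g t := by
  simp [chiTerm]

theorem chiTerm_add_two_succ (f g : ℕ → M) {k j : ℕ} (hj : j ≤ k) :
    chiTerm f g (k + 2) (j + 1) =
      f 0 * chiTerm (fun t ↦ f (t + 1)) (fun t ↦ g (t + 1)) k j * g (k + 2) := by
  rw [chiTerm, chiTerm, show k + 2 - (j + 1) = k - j + 1 by omega,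
    show k + 2 + 1 - (j + 1) = k + 1 - j + 1 by omega, prod_range_succ',
    prod_Icc_succ_top (by omega), ← map_add_right_Icc, prod_map]
  simp only [addRightEmbedding_apply]
  ac_rfl

theorem prod_Icc_one_eq_prod_range {g : ℕ → M} {n : ℕ} (h : g n = g 0) :
    ∏ t ∈ Icc 1 n, g t = ∏ t ∈ range n, g t := by
  cases n with
  | zero => simp
  | succ m =>
    rw [prod_Icc_succ_top (by omega), h, prod_range_succ', ← Ico_add_one_right_eq_Icc,
      prod_Ico_eq_prod_range]
    simp only [add_tsub_cancel_right, add_comm 1]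

end ChiTerm

theorem Y_mul_Y (l : ℕ) (n e e' : ℤ) : Y l n e * Y l n e' = Y l n (e + e') := by
  rw [Y, Y, Y, AddMonoidAlgebra.single_mul_single, ← Finsupp.single_add, mul_one]

theorem Y_zero (l : ℕ) (n : ℤ) : Y l n 0 = 1 := by
  rw [Y, Finsupp.single_zero]
  rfl

theorem Y_add_two_mul (l : ℕ) (n e : ℤ) : Y l (n + 2 * l) e = Y l n e := by
  rw [Y, Y, Int.add_mul_ediv_left n (l : ℤ) two_ne_zero]
  simp

theorem chi_eq_sum_chiTerm (l k : ℕ) (a : ℤ) :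
    chi l k a = ∑ i ∈ range (k + 1),
      chiTerm (fun t : ℕ ↦ Y l (a + 2 * t) 1) (fun t : ℕ ↦ Y l (a + 2 * t) (-1)) k i :=
  rfl

theorem Y_mul_Y_add_two_mul_neg (l : ℕ) (a : ℤ) : Y l a 1 * Y l (a + 2 * l) (-1) = 1 := by
  rw [Y_add_two_mul, Y_mul_Y, add_neg_cancel, Y_zero]

theorem chiTerm_Y_add_two_succ (k j : ℕ) (a : ℤ) (hj : j ≤ k) :
    chiTerm (fun t : ℕ ↦ Y (k + 2) (a + 2 * t) 1) (fun t : ℕ ↦ Y (k + 2) (a + 2 * t) (-1))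
        (k + 2) (j + 1) =
      chiTerm (fun t : ℕ ↦ Y (k + 2) (a + 2 + 2 * t) 1)
        (fun t : ℕ ↦ Y (k + 2) (a + 2 + 2 * t) (-1)) k j := by
  have shift (e : ℤ) : (fun t : ℕ ↦ Y (k + 2) (a + 2 * ↑(t + 1)) e) =
      fun t : ℕ ↦ Y (k + 2) (a + 2 + 2 * t) e := by
    funext t
    push_cast
    ring_nf
  rw [chiTerm_add_two_succ _ _ hj, shift, shift, mul_right_comm, Nat.cast_zero, mul_zero,
    add_zero, Y_mul_Y_add_two_mul_neg, one_mul]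

theorem chi_l_decomposition_general (l : ℕ) (hl : 2 ≤ l) (a : ℤ) :
    chi l l a =
      (∏ t ∈ Finset.range l, Y l (a + 2 * (t : ℤ)) 1) +
        (∏ t ∈ Finset.range l, Y l (a + 2 * (t : ℤ)) (-1)) +
        chi l (l - 2) (a + 2) := by
  obtain ⟨k, rfl⟩ : ∃ k, l = k + 2 := ⟨l - 2, by omega⟩
  have last : ∏ t ∈ Icc 1 (k + 2), Y (k + 2) (a + 2 * (t : ℤ)) (-1) =
      ∏ t ∈ range (k + 2), Y (k + 2) (a + 2 * (t : ℤ)) (-1) :=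
    prod_Icc_one_eq_prod_range (by simpa using Y_add_two_mul (k + 2) a (-1))
  rw [chi_eq_sum_chiTerm, chi_eq_sum_chiTerm, sum_range_succ', sum_range_succ,
    sum_congr rfl fun j hj ↦ chiTerm_Y_add_two_succ k j a (Nat.le_of_lt_succ (mem_range.mp hj)),
    chiTerm_zero, chiTerm_self, last, Nat.add_sub_cancel]
  abel

/-- The root-of-unity phenomenon: for every even integer `a`,
`χ(l,a) = Y_a Y_{a+2}⋯Y_{a+2l−2} + (Y_a Y_{a+2}⋯Y_{a+2l−2})^{−1} + χ(l−2,a+2)`. -/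
theorem chi_l_decomposition (l : ℕ) (hl : 2 ≤ l) (a : ℤ) (ha : Even a) :
    chi l l a =
      (∏ t ∈ Finset.range l, Y l (a + 2 * (t : ℤ)) 1) +
        (∏ t ∈ Finset.range l, Y l (a + 2 * (t : ℤ)) (-1)) +
        chi l (l - 2) (a + 2) :=
  chi_l_decomposition_general l hl a
end

section
/- The following identity holds in R_l: χ(l−1,0)·χ(1,2l−2) = Z + χ(l−2,0) + χ(l−2,2). (This is the character form of the relation expressing the coefficient λ as a polynomial in cluster variables, equation (34) of the paper, used to prove that the standard monomials span the generalised cluster algebra.) -/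
/-!
Every term of `χ(k+2, a)` is a monomial `Y_a ⋯ Y_{a+2j−2} · (Y_{a+2j+2} ⋯ Y_{a+2k+2})⁻¹`.
Multiplying the terms by `Y_{a+2k+2}` cancels the top inverse factor and produces
`χ(k,a)` together with the full product `Y_a ⋯ Y_{a+2k+2}`; multiplying them by `Y_a⁻¹`
cancels the bottom factor and produces `χ(k,a+2)` together with the inverse of the full
product.  For `k = l − 2`, `a = 0` the periodicity `Y_{2l} = Y_0` turns
`χ(1, 2l−2) = Y_{2l−2} + Y_{2l}⁻¹` into `Y_{2l−2} + Y_0⁻¹`, and the two full products make up `Z`.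
-/

open Finset AddMonoidAlgebra

namespace LambdaRelation

variable (l : ℕ)

noncomputable def yExp (n : ℤ) : ZMod l →₀ ℤ :=
  Finsupp.single ((n / 2 : ℤ) : ZMod l) 1

noncomputable def yWeight (a : ℤ) (s : Finset ℕ) : ZMod l →₀ ℤ :=
  ∑ t ∈ s, yExp l (a + 2 * t)

noncomputable def chiTermExp (k : ℕ) (a : ℤ) (i : ℕ) : ZMod l →₀ ℤ :=
  yWeight l a (range (k - i)) - yWeight l a (Icc (k + 1 - i) k)

lemma Y_one (n : ℤ) : Y l n 1 = single (yExp l n) 1 := rfl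

lemma Y_neg_one (n : ℤ) : Y l n (-1) = single (-yExp l n) 1 := by
  rw [Y, yExp, Finsupp.single_neg]

lemma Y_add_two_mul_self (n e : ℤ) : Y l (n + 2 * l) e = Y l n e := by
  have h : (n + 2 * l) / 2 = n / 2 + l := by omega
  simp [Y, h]

lemma prod_Y_one (a : ℤ) (s : Finset ℕ) :
    ∏ t ∈ s, Y l (a + 2 * t) 1 = single (yWeight l a s) 1 := by
  simp only [Y_one, prod_single, prod_const_one, yWeight]

lemma prod_Y_neg_one (a : ℤ) (s : Finset ℕ) :
    ∏ t ∈ s, Y l (a + 2 * t) (-1) = single (-yWeight l a s) 1 := by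
  simp only [Y_neg_one, prod_single, prod_const_one, yWeight, sum_neg_distrib]

lemma yWeight_map_succ (a : ℤ) (s : Finset ℕ) :
    yWeight l a (s.map (addRightEmbedding 1)) = yWeight l (a + 2) s := by
  rw [yWeight, yWeight, sum_map]
  refine sum_congr rfl fun t _ => ?_
  simp only [addRightEmbedding_apply, Nat.cast_add, Nat.cast_one]
  ring_nf

lemma yWeight_range_succ (a : ℤ) (n : ℕ) :
    yWeight l a (range (n + 1)) = yWeight l a (range n) + yExp l (a + 2 * n) :=
  sum_range_succ _ n

lemma yWeight_range_succ' (a : ℤ) (n : ℕ) :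
    yWeight l a (range (n + 1)) = yExp l a + yWeight l (a + 2) (range n) := by
  rw [yWeight, yWeight, sum_range_succ', add_comm]
  congr 1
  · simp
  · refine sum_congr rfl fun t _ => ?_
    push_cast
    ring_nf

lemma chi_eq_sum_single (k : ℕ) (a : ℤ) :
    chi l k a = ∑ i ∈ range (k + 1), single (chiTermExp l k a i) 1 := by
  refine sum_congr rfl fun i _ => ?_
  rw [prod_Y_one, prod_Y_neg_one, single_mul_single, mul_one, chiTermExp, sub_eq_add_neg]

lemma chi_one (a : ℤ) : chi l 1 a = Y l a 1 + Y l (a + 2) (-1) := by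
  simp [chi, sum_range_succ]

section TermExponents

variable (k : ℕ) (a : ℤ)

lemma chiTermExp_succ_zero_add :
    chiTermExp l (k + 1) a 0 + yExp l (a + 2 * (k + 1 : ℕ)) = yWeight l a (range (k + 2)) := by
  rw [chiTermExp, yWeight_range_succ l a (k + 1), Icc_eq_empty (by omega)]
  simp [yWeight]

lemma chiTermExp_succ_succ_add {i : ℕ} (hi : i ≤ k) :
    chiTermExp l (k + 1) a (i + 1) + yExp l (a + 2 * (k + 1 : ℕ)) = chiTermExp l k a i := by
  have hIcc : Icc (k + 1 - i) (k + 1) = insert (k + 1) (Icc (k + 1 - i) k) := by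
    rw [insert_Icc_right_eq_Icc_add_one (by omega)]
  rw [chiTermExp, chiTermExp, Nat.add_sub_add_right, show k + 1 + 1 - (i + 1) = k + 1 - i by omega,
    hIcc]
  simp only [yWeight]
  rw [sum_insert (by simp)]
  abel

lemma chiTermExp_succ_sub {i : ℕ} (hi : i ≤ k) :
    chiTermExp l (k + 1) a i - yExp l a = chiTermExp l k (a + 2) i := by
  have hIcc : Icc (k + 1 + 1 - i) (k + 1) = (Icc (k + 1 - i) k).map (addRightEmbedding 1) := by
    rw [map_add_right_Icc, show k + 1 + 1 - i = k + 1 - i + 1 by omega]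
  rw [chiTermExp, chiTermExp, hIcc, yWeight_map_succ, show k + 1 - i = k - i + 1 by omega,
    yWeight_range_succ']
  abel

lemma chiTermExp_succ_last_sub :
    chiTermExp l (k + 1) a (k + 1) - yExp l a = -yWeight l a (range (k + 2)) := by
  have hIcc : Icc 1 (k + 1) = (range (k + 1)).map (addRightEmbedding 1) := by
    rw [range_eq_Ico, map_add_right_Ico]
    rfl
  simp only [chiTermExp, Nat.sub_self, range_zero, show k + 1 + 1 - (k + 1) = 1 by omega, hIcc,
    yWeight_map_succ, yWeight_range_succ' l a (k + 1)]
  simp only [yWeight, sum_empty, zero_sub, neg_add_rev]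
  abel

end TermExponents

theorem chi_succ_mul (k : ℕ) (a : ℤ) :
    chi l (k + 1) a * (Y l (a + 2 * (k + 1 : ℕ)) 1 + Y l a (-1)) =
      (∏ t ∈ range (k + 2), Y l (a + 2 * t) 1) + (∏ t ∈ range (k + 2), Y l (a + 2 * t) (-1)) +
        chi l k a + chi l k (a + 2) := by
  rw [prod_Y_one, prod_Y_neg_one]
  simp only [chi_eq_sum_single, Y_one, Y_neg_one, mul_add, sum_mul, single_mul_single, mul_one]
  rw [sum_range_succ', sum_range_succ _ (k + 1), chiTermExp_succ_zero_add,
    ← sub_eq_add_neg, chiTermExp_succ_last_sub]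
  have hTop : ∀ i ∈ range (k + 1), single (chiTermExp l (k + 1) a (i + 1) +
      yExp l (a + 2 * (k + 1 : ℕ))) (1 : ℤ) = single (chiTermExp l k a i) 1 := fun i hi => by
    rw [chiTermExp_succ_succ_add l k a (by simpa [Nat.lt_succ_iff] using hi)]
  have hBot : ∀ i ∈ range (k + 1), single (chiTermExp l (k + 1) a i + -yExp l a) (1 : ℤ) =
      single (chiTermExp l k (a + 2) i) 1 := fun i hi => by
    rw [← sub_eq_add_neg, chiTermExp_succ_sub l k a (by simpa [Nat.lt_succ_iff] using hi)]
  rw [sum_congr rfl hTop, sum_congr rfl hBot]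
  abel

end LambdaRelation

open LambdaRelation

/-- Equation (34) of the paper, in character form:
`χ(l−1,0)·χ(1,2l−2) = Z + χ(l−2,0) + χ(l−2,2)`. -/
theorem lambda_relation (l : ℕ) (hl : 2 ≤ l) :
    chi l (l - 1) 0 * chi l 1 (2 * (l : ℤ) - 2) =
      Z l + chi l (l - 2) 0 + chi l (l - 2) 2 := by
  obtain ⟨k, rfl⟩ : ∃ k, l = k + 2 := ⟨l - 2, by omega⟩
  have hχ₁ : chi (k + 2) 1 (2 * ((k + 2 : ℕ) : ℤ) - 2) =
      Y (k + 2) (0 + 2 * (k + 1 : ℕ)) 1 + Y (k + 2) 0 (-1) := by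
    rw [chi_one, show 2 * ((k + 2 : ℕ) : ℤ) - 2 + 2 = 0 + 2 * ((k + 2 : ℕ) : ℤ) by ring,
      Y_add_two_mul_self]
    push_cast
    ring_nf
  rw [show k + 2 - 1 = k + 1 from rfl, Nat.add_sub_cancel, hχ₁, chi_succ_mul, Z]
  simp only [zero_add]
end

section
/- The l fundamental characters χ(1,0), χ(1,2), …, χ(1,2l−2) ∈ R_l, i.e. the elements Y_{2m} + Y_{2m+2}^{−1} for m = 0,1,…,l−1 (indices modulo 2l), are algebraically independent over ℤ: the ℤ-algebra homomorphism from the polynomial ring ℤ[x_0,…,x_{l−1}] to R_l sending x_m to Y_{2m} + Y_{2m+2}^{−1} is injective. (This is the character-level form of the isomorphism K₀(𝒞_{ε^ℤ}) ≅ ℤ[[L(Y_{2k})], 0 ≤ k ≤ l−1] for U_ε^res(L sl₂).) -/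
/-!
A polynomial relation among the characters is impossible because of leading terms for the total
degree in the `Y`'s: the character `Y_{2m} + Y_{2m+2}^{−1}` has leading term `Y_{2m}`, so the
image of a monomial `x^β` has leading term `Y^β` (the `Y_{2m}`, `m < l`, are distinct variables),
and in the image of a nonzero polynomial the leading term of a monomial of maximal degree cannot
cancel.
-/

namespace AddMonoidAlgebra

variable {R A B : Type*} [CommRing R] [AddCommMonoid A] [AddCommMonoid B] [LinearOrder B]
  {D : A →+ B}

/-- `D` need not be injective: `a` is just the only exponent of maximal `D`-degree in `p`. -/
def MonicAt (D : A →+ B) (a : A) (p : R[A]) : Prop :=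
  ∀ c ∈ (p - single a 1).coeff.support, D c < D a

lemma monicAt_single (a : A) : MonicAt D a (single a (1 : R)) := by
  simp [MonicAt]

lemma monicAt_one : MonicAt D 0 (1 : R[A]) :=
  monicAt_single 0

lemma monicAt_single_add_single {a b : A} (r : R) (h : D b < D a) :
    MonicAt D a (single a 1 + single b r) := by
  intro c hc
  rw [add_sub_cancel_left, coeff_single] at hc
  rwa [Finset.mem_singleton.mp (Finsupp.support_single_subset hc)]

lemma MonicAt.coeff_eq_zero {a c : A} {p : R[A]} (hp : MonicAt D a p) (hca : c ≠ a)
    (hle : D a ≤ D c) : p.coeff c = 0 := by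
  have hc : c ∉ (p - single a 1).coeff.support := fun hc => (hp c hc).not_ge hle
  simpa [coeff_sub, coeff_single, Finsupp.single_eq_of_ne hca] using hc

lemma MonicAt.coeff_self {a : A} {p : R[A]} (hp : MonicAt D a p) : p.coeff a = 1 := by
  have ha : a ∉ (p - single a 1).coeff.support := fun ha => (hp a ha).false
  simpa [coeff_sub, coeff_single, sub_eq_zero] using ha

lemma MonicAt.degree_le {a c : A} {p : R[A]} (hp : MonicAt D a p) (hc : c ∈ p.coeff.support) :
    D c ≤ D a := by
  by_cases hca : c = a
  · rw [hca]
  · exact not_lt.mp fun hlt => Finsupp.mem_support_iff.mp hc (hp.coeff_eq_zero hca hlt.le)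

section OrderedCancel

variable [IsOrderedCancelAddMonoid B]

lemma degree_lt_of_mem_support_mul {f g : R[A]} {d e : B}
    (hf : ∀ c ∈ f.coeff.support, D c ≤ d) (hg : ∀ c ∈ g.coeff.support, D c < e) :
    ∀ c ∈ (f * g).coeff.support, D c < d + e := by
  classical
  intro c hc
  obtain ⟨c₁, hc₁, c₂, hc₂, rfl⟩ := Finset.mem_add.mp (support_coeff_mul_subset f g hc)
  rw [map_add]
  exact add_lt_add_of_le_of_lt (hf c₁ hc₁) (hg c₂ hc₂)

lemma MonicAt.mul {a b : A} {p q : R[A]} (hp : MonicAt D a p) (hq : MonicAt D b q) :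
    MonicAt D (a + b) (p * q) := by
  have hsplit : p * q - single (a + b) 1
      = single a 1 * (q - single b 1) + (p - single a 1) * q := by
    have hab : single (a + b) (1 : R) = single a 1 * single b 1 := by
      rw [single_mul_single, one_mul]
    rw [hab]
    ring
  classical
  intro c hc
  rw [hsplit, coeff_add] at hc
  rw [map_add]
  rcases Finset.mem_union.mp (Finsupp.support_add hc) with hc | hc
  · exact degree_lt_of_mem_support_mul (fun c hc => (monicAt_single a).degree_le hc) hq c hc
  · rw [mul_comm] at hc
    rw [add_comm]
    exact degree_lt_of_mem_support_mul (fun c hc => hq.degree_le hc) hp c hc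

lemma MonicAt.pow {a : A} {p : R[A]} (hp : MonicAt D a p) (n : ℕ) : MonicAt D (n • a) (p ^ n) := by
  induction n with
  | zero => simpa using monicAt_one
  | succ n ih => simpa [pow_succ, succ_nsmul] using ih.mul hp

lemma monicAt_prod {ι : Type*} (s : Finset ι) {a : ι → A} {p : ι → R[A]}
    (hp : ∀ i ∈ s, MonicAt D (a i) (p i)) : MonicAt D (∑ i ∈ s, a i) (∏ i ∈ s, p i) := by
  classical
  induction s using Finset.induction_on with
  | empty => simpa using monicAt_one
  | insert i s hi ih =>
    rw [Finset.sum_insert hi, Finset.prod_insert hi]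
    exact (hp i (s.mem_insert_self i)).mul (ih fun j hj => hp j (Finset.mem_insert_of_mem hj))

end OrderedCancel

lemma coeff_sum_smul_of_monicAt {ι : Type*} {s : Finset ι} {a : ι → A} {p : ι → R[A]}
    (c : ι → R) (hp : ∀ i ∈ s, MonicAt D (a i) (p i)) (ha : Set.InjOn a s) {i₀ : ι}
    (hi₀ : i₀ ∈ s) (hmax : ∀ i ∈ s, D (a i) ≤ D (a i₀)) :
    (∑ i ∈ s, c i • p i).coeff (a i₀) = c i₀ := by
  rw [coeff_sum, Finset.sum_apply', Finset.sum_eq_single_of_mem i₀ hi₀]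
  · rw [coeff_smul_apply, (hp i₀ hi₀).coeff_self, smul_eq_mul, mul_one]
  · intro i hi hne
    rw [coeff_smul_apply, (hp i hi).coeff_eq_zero (fun h => hne (ha hi₀ hi h).symm) (hmax i hi),
      smul_zero]

end AddMonoidAlgebra

open AddMonoidAlgebra in
theorem MvPolynomial.aeval_injective_of_monicAt {R A B σ : Type*} [CommRing R] [AddCommMonoid A]
    [AddCommMonoid B] [LinearOrder B] [IsOrderedCancelAddMonoid B] {D : A →+ B}
    {x : σ → R[A]} {a : σ → A} (hx : ∀ i, MonicAt D (a i) (x i)) (ha : LinearIndependent ℕ a) :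
    Function.Injective (aeval x : MvPolynomial σ R →ₐ[R] R[A]) := by
  rw [injective_iff_map_eq_zero]
  intro p hp
  by_contra hp0
  obtain ⟨β₀, hβ₀, hmax⟩ := p.support.exists_max_image
    (fun β => D (Finsupp.linearCombination ℕ a β)) (support_nonempty.mpr hp0)
  have hmonomial : ∀ β : σ →₀ ℕ,
      MonicAt D (Finsupp.linearCombination ℕ a β) (β.prod fun i k => x i ^ k) := fun β => by
    rw [Finsupp.linearCombination_apply]
    exact monicAt_prod _ fun i _ => (hx i).pow (β i)
  have hcoeff := coeff_sum_smul_of_monicAt (fun β => p.coeff β) (fun β _ => hmonomial β)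
    ha.finsuppLinearCombination_injective.injOn hβ₀ hmax
  have hsum : aeval x p = ∑ β ∈ p.support, p.coeff β • β.prod fun i k => x i ^ k := by
    simp only [aeval_def, eval₂_eq, Algebra.smul_def, Finsupp.prod]
  rw [← hsum, hp] at hcoeff
  exact mem_support_iff.mp hβ₀ hcoeff.symm

lemma Y_two_mul (l : ℕ) (n e : ℤ) :
    Y l (2 * n) e = AddMonoidAlgebra.single (Finsupp.single (n : ZMod l) e) 1 := by
  rw [Y, Int.mul_ediv_cancel_left n two_ne_zero]

lemma linearIndependent_single_one_zmod (l : ℕ) :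
    LinearIndependent ℕ fun m : Fin l => Finsupp.single (((m : ℤ)) : ZMod l) (1 : ℤ) := by
  have hinj : Function.Injective fun m : Fin l => (((m : ℤ)) : ZMod l) := fun m m' h => by
    simp only [Int.cast_natCast, ZMod.natCast_eq_natCast_iff'] at h
    exact Fin.ext (by rwa [Nat.mod_eq_of_lt m.2, Nat.mod_eq_of_lt m'.2] at h)
  exact ((Finsupp.linearIndependent_single_one ℤ (ZMod l)).comp _ hinj).restrict_scalars' ℕ

theorem fundamental_characters_algebraically_independent_general (l : ℕ) :
    Function.Injective
      (MvPolynomial.aeval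
        (fun m : Fin l => Y l (2 * (m : ℤ)) 1 + Y l (2 * (m : ℤ) + 2) (-1)) :
        MvPolynomial (Fin l) ℤ →ₐ[ℤ] Rl l) := by
  refine MvPolynomial.aeval_injective_of_monicAt (D := Finsupp.liftAddHom fun _ => .id ℤ)
    (fun m => ?_) (linearIndependent_single_one_zmod l)
  rw [show 2 * (m : ℤ) + 2 = 2 * ((m : ℤ) + 1) by ring, Y_two_mul, Y_two_mul]
  refine AddMonoidAlgebra.monicAt_single_add_single _ ?_
  simp only [Finsupp.liftAddHom_apply_single, AddMonoidHom.id_apply]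
  norm_num

/-- The `l` fundamental characters `Y_{2m} + Y_{2m+2}^{−1}` (`m = 0,…,l−1`) are
algebraically independent over `ℤ`: the `ℤ`-algebra homomorphism from
`ℤ[x_0,…,x_{l−1}]` to `Rl l` sending `x_m` to `Y_{2m} + Y_{2m+2}^{−1}` is injective. -/
theorem fundamental_characters_algebraically_independent (l : ℕ) (hl : 2 ≤ l) :
    Function.Injective
      (MvPolynomial.aeval
        (fun m : Fin l => Y l (2 * (m : ℤ)) 1 + Y l (2 * (m : ℤ) + 2) (-1)) :
        MvPolynomial (Fin l) ℤ →ₐ[ℤ] Rl l) :=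
  fundamental_characters_algebraically_independent_general l
end
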